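/- arXiv:1102.0401 — 9 statements merged into one kernel-verified Lean document; each statement's English description precedes it below -/
import Mathlib

section
/- If A and B are critical sets of a graph G, then both A ∪ B and A ∩ B are critical sets of G. -/
open Finset

open scoped Classical

variable {V : Type*}

/-- The neighborhood `N(X)` of a set of vertices `X`. -/
noncomputable def nbhd [Fintype V] (G : SimpleGraph V) (X : Finset V) : Finset V :=
  Finset.univ.filter (fun v => ∃ x ∈ X, G.Adj v x)

/-- The difference `d(X) = |X| - |N(X)|`. -/
noncomputable def diffd [Fintype V] (G : SimpleGraph V) (X : Finset V) : ℤ :=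
  (X.card : ℤ) - ((nbhd G X).card : ℤ)

/-- The critical difference `d_c(G) = max{d(X) : X ⊆ V}`. -/
noncomputable def critDiff [Fintype V] (G : SimpleGraph V) : ℤ :=
  Finset.univ.powerset.sup' ⟨∅, Finset.empty_mem_powerset _⟩ (diffd G)

/-- A set of vertices is independent if no two of its vertices are adjacent. -/
def IsIndep [Fintype V] (G : SimpleGraph V) (A : Finset V) : Prop :=
  ∀ a ∈ A, ∀ b ∈ A, ¬ G.Adj a b

/-- A critical independent set: independent with `d(A) = d_c(G)`. -/
def IsCritIndep [Fintype V] (G : SimpleGraph V) (A : Finset V) : Prop :=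
  IsIndep G A ∧ diffd G A = critDiff G

/-- The independence number `α(G)`. -/
noncomputable def indepNum [Fintype V] (G : SimpleGraph V) : ℕ :=
  (Finset.univ.powerset.filter (fun A => IsIndep G A)).sup Finset.card

/-- The independence number of the induced subgraph `G[X]`,
realized as the largest independent set contained in `X`. -/
noncomputable def indepNumOn [Fintype V] (G : SimpleGraph V) (X : Finset V) : ℕ :=
  (X.powerset.filter (fun A => IsIndep G A)).sup Finset.card

/-- A matching: a set of edges of `G`, pairwise vertex-disjoint. -/
def IsMatchingSet [Fintype V] (G : SimpleGraph V) (M : Finset (Sym2 V)) : Prop :=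
  (∀ e ∈ M, e ∈ G.edgeSet) ∧
  (∀ e ∈ M, ∀ f ∈ M, e ≠ f → ∀ v : V, v ∈ e → v ∉ f)

/-- The matching number `μ(G)`. -/
noncomputable def matchNum [Fintype V] (G : SimpleGraph V) : ℕ :=
  ((Finset.univ : Finset (Sym2 V)).powerset.filter (fun M => IsMatchingSet G M)).sup Finset.card

/-- The matching number of the induced subgraph `G[X]`, realized as the
largest matching of `G` all of whose edges have both endpoints in `X`. -/
noncomputable def matchNumOn [Fintype V] (G : SimpleGraph V) (X : Finset V) : ℕ :=
  ((Finset.univ : Finset (Sym2 V)).powerset.filter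
    (fun M => IsMatchingSet G M ∧ ∀ e ∈ M, ∀ v ∈ e, v ∈ X)).sup Finset.card

/-- `ker(G)`: the intersection of all critical independent sets. -/
noncomputable def kerG [Fintype V] (G : SimpleGraph V) : Finset V :=
  Finset.univ.filter (fun v => ∀ A : Finset V, IsCritIndep G A → v ∈ A)

/-- A maximum independent set, i.e. a member of `Ω(G)`. -/
def IsMaxIndep [Fintype V] (G : SimpleGraph V) (S : Finset V) : Prop :=
  IsIndep G S ∧ S.card = indepNum G

/-- `core(G)`: the intersection of all maximum independent sets. -/
noncomputable def coreG [Fintype V] (G : SimpleGraph V) : Finset V :=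
  Finset.univ.filter (fun v => ∀ S : Finset V, IsMaxIndep G S → v ∈ S)

/-- `corona(G)`: the union of all maximum independent sets. -/
noncomputable def coronaG [Fintype V] (G : SimpleGraph V) : Finset V :=
  Finset.univ.filter (fun v => ∃ S : Finset V, IsMaxIndep G S ∧ v ∈ S)

/-- `G` has no isolated vertices. -/
def NoIsolated (G : SimpleGraph V) : Prop := ∀ v : V, ∃ w, G.Adj v w

lemma diffd_le_critDiff {V : Type*} [Fintype V] (G : SimpleGraph V) (X : Finset V) :
    diffd G X ≤ critDiff G :=
  Finset.le_sup' (diffd G) (Finset.mem_powerset.2 (Finset.subset_univ X))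

lemma nbhd_union {V : Type*} [Fintype V] (G : SimpleGraph V) (A B : Finset V) :
    nbhd G (A ∪ B) = nbhd G A ∪ nbhd G B := by
  ext v
  simp only [nbhd, Finset.mem_filter, Finset.mem_union, Finset.mem_univ, true_and]
  constructor
  · rintro ⟨x, hx | hx, hadj⟩
    · exact Or.inl ⟨x, hx, hadj⟩
    · exact Or.inr ⟨x, hx, hadj⟩
  · rintro (⟨x, hx, hadj⟩ | ⟨x, hx, hadj⟩)
    · exact ⟨x, Or.inl hx, hadj⟩
    · exact ⟨x, Or.inr hx, hadj⟩

lemma nbhd_inter_subset {V : Type*} [Fintype V] (G : SimpleGraph V) (A B : Finset V) :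
    nbhd G (A ∩ B) ⊆ nbhd G A ∩ nbhd G B := by
  intro v hv
  simp only [nbhd, Finset.mem_filter, Finset.mem_inter, Finset.mem_univ, true_and] at *
  obtain ⟨x, ⟨hxA, hxB⟩, hadj⟩ := hv
  exact ⟨⟨x, hxA, hadj⟩, ⟨x, hxB, hadj⟩⟩

/-- unions and intersections of critical sets are critical. -/
theorem stmt_1 {V : Type*} [Fintype V] (G : SimpleGraph V) (A B : Finset V)
    (hA : diffd G A = critDiff G) (hB : diffd G B = critDiff G) :
    diffd G (A ∪ B) = critDiff G ∧ diffd G (A ∩ B) = critDiff G := by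
  have hcardV : (A ∪ B).card + (A ∩ B).card = A.card + B.card :=
    Finset.card_union_add_card_inter A B
  have hcardN : (nbhd G (A ∪ B)).card + (nbhd G (A ∩ B)).card
      ≤ (nbhd G A).card + (nbhd G B).card := by
    have h1 : (nbhd G (A ∪ B)).card = (nbhd G A ∪ nbhd G B).card := by
      rw [nbhd_union]
    have h2 : (nbhd G (A ∩ B)).card ≤ (nbhd G A ∩ nbhd G B).card :=
      Finset.card_le_card (nbhd_inter_subset G A B)
    calc (nbhd G (A ∪ B)).card + (nbhd G (A ∩ B)).card
        ≤ (nbhd G A ∪ nbhd G B).card + (nbhd G A ∩ nbhd G B).card := by omega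
      _ = (nbhd G A).card + (nbhd G B).card :=
          Finset.card_union_add_card_inter _ _
  have hsum : diffd G A + diffd G B ≤ diffd G (A ∪ B) + diffd G (A ∩ B) := by
    simp only [diffd]
    push_cast
    omega
  have h1 := diffd_le_critDiff G (A ∪ B)
  have h2 := diffd_le_critDiff G (A ∩ B)
  rw [hA, hB] at hsum
  constructor <;> omega
end

section
/- If A is a critical independent set of a graph G and X = A ∪ N(A), then the induced subgraph G[X] is a König–Egerváry graph, i.e., α(G[X]) + μ(G[X]) = |X|. -/
open Finset

open scoped Classical

variable {V : Type*}

section AuxLemmas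

variable [Fintype V]

lemma aux_mem_nbhd {G : SimpleGraph V} {X : Finset V} {v : V} :
    v ∈ nbhd G X ↔ ∃ x ∈ X, G.Adj v x := by simp [nbhd]

lemma aux_disj {G : SimpleGraph V} {A : Finset V} (hA : IsIndep G A) :
    ∀ x ∈ A, x ∉ nbhd G A := by
  intro x hx hmem
  obtain ⟨y, hy, hadj⟩ := aux_mem_nbhd.mp hmem
  exact hA x hx y hy hadj

lemma aux_upper (G : SimpleGraph V) (X : Finset V) :
    indepNumOn G X + matchNumOn G X ≤ X.card := by
  obtain ⟨S, hS, hSval⟩ := Finset.exists_mem_eq_sup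
    (X.powerset.filter (fun A => IsIndep G A))
    ⟨∅, Finset.mem_filter.mpr ⟨Finset.empty_mem_powerset _, by simp [IsIndep]⟩⟩ Finset.card
  obtain ⟨M, hM, hMval⟩ := Finset.exists_mem_eq_sup
    ((Finset.univ : Finset (Sym2 V)).powerset.filter
      (fun M => IsMatchingSet G M ∧ ∀ e ∈ M, ∀ v ∈ e, v ∈ X))
    ⟨∅, by simp [IsMatchingSet]⟩ Finset.card
  rw [Finset.mem_filter, Finset.mem_powerset] at hS hM
  obtain ⟨hSX, hSind⟩ := hS
  obtain ⟨-, ⟨hMedge, hMdisj⟩, hMX⟩ := hM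
  have hchoice : ∀ e ∈ M, ∃ v, v ∈ e ∧ v ∉ S ∧ v ∈ X := by
    intro e he
    induction e with
    | h a b =>
      have hadj : G.Adj a b := (SimpleGraph.mem_edgeSet G).mp (hMedge _ he)
      by_cases ha : a ∈ S
      · refine ⟨b, by simp, fun hb => hSind a ha b hb hadj, hMX _ he b (by simp)⟩
      · exact ⟨a, by simp, ha, hMX _ he a (by simp)⟩
  choose g hg1 hg2 hg3 using hchoice
  have hcard : M.card ≤ (X \ S).card := by
    rw [← Finset.card_attach (s := M)]
    refine Finset.card_le_card_of_injOn (fun e => g e.1 e.2) ?_ ?_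
    · intro e _
      exact Finset.mem_sdiff.mpr ⟨hg3 e.1 e.2, hg2 e.1 e.2⟩
    · intro e _ f _ h
      simp only at h
      by_contra hne
      exact hMdisj e.1 e.2 f.1 f.2 (fun hh => hne (Subtype.ext hh)) _ (hg1 e.1 e.2)
        (h ▸ hg1 f.1 f.2)
  rw [Finset.card_sdiff_of_subset hSX] at hcard
  have hSX' := Finset.card_le_card hSX
  rw [indepNumOn, hSval, matchNumOn, hMval]
  omega

lemma aux_hall (G : SimpleGraph V) (A : Finset V) (hA : IsCritIndep G A) :
    ∃ f : {v // v ∈ nbhd G A} → V, Function.Injective f ∧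
      ∀ v, f v ∈ A ∧ G.Adj (v : V) (f v) := by
  classical
  have hhall : ∀ s : Finset {v // v ∈ nbhd G A},
      s.card ≤ (s.biUnion (fun v => A.filter (fun a => G.Adj (v : V) a))).card := by
    intro s
    set T : Finset V := s.image Subtype.val with hTdef
    have hTcard : T.card = s.card := by
      rw [hTdef]; exact Finset.card_image_of_injective s Subtype.val_injective
    have hTsub : T ⊆ nbhd G A := by
      intro x hx
      rw [hTdef] at hx
      obtain ⟨v, -, rfl⟩ := Finset.mem_image.mp hx
      exact v.2
    have hbi : A ∩ nbhd G T ⊆ s.biUnion (fun v : {v // v ∈ nbhd G A} =>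
        A.filter (fun a => G.Adj (v : V) a)) := by
      intro a ha
      obtain ⟨ha1, ha2⟩ := Finset.mem_inter.mp ha
      obtain ⟨x, hx, hadj⟩ := aux_mem_nbhd.mp ha2
      rw [hTdef] at hx
      obtain ⟨v, hv, rfl⟩ := Finset.mem_image.mp hx
      exact Finset.mem_biUnion.mpr ⟨v, hv, Finset.mem_filter.mpr ⟨ha1, hadj.symm⟩⟩
    refine le_trans ?_ (Finset.card_le_card hbi)
    rw [← hTcard]
    set A' : Finset V := A \ nbhd G T with hA'def
    have h1 : nbhd G A' ⊆ nbhd G A \ T := by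
      intro w hw
      obtain ⟨x, hx, hadj⟩ := aux_mem_nbhd.mp hw
      rw [hA'def, Finset.mem_sdiff] at hx
      refine Finset.mem_sdiff.mpr ⟨aux_mem_nbhd.mpr ⟨x, hx.1, hadj⟩, fun hwT => ?_⟩
      exact hx.2 (aux_mem_nbhd.mpr ⟨w, hwT, hadj.symm⟩)
    have h2 : (nbhd G A').card ≤ (nbhd G A).card - T.card := by
      calc (nbhd G A').card ≤ (nbhd G A \ T).card := Finset.card_le_card h1
      _ = (nbhd G A).card - T.card := Finset.card_sdiff_of_subset hTsub
    have h3 : A'.card = A.card - (A ∩ nbhd G T).card := by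
      rw [hA'def, ← Finset.sdiff_inter_self_left A (nbhd G T),
        Finset.card_sdiff_of_subset Finset.inter_subset_left]
    have h4 : diffd G A' ≤ diffd G A := by
      rw [hA.2]
      exact Finset.le_sup' (diffd G) (Finset.mem_powerset.mpr (Finset.subset_univ A'))
    have hTle : T.card ≤ (nbhd G A).card := Finset.card_le_card hTsub
    have hIle : (A ∩ nbhd G T).card ≤ A.card := Finset.card_le_card Finset.inter_subset_left
    simp only [diffd] at h4
    omega
  obtain ⟨f, hf, hmem⟩ := (Finset.all_card_le_biUnion_card_iff_exists_injective
      (fun v : {v // v ∈ nbhd G A} => A.filter (fun a => G.Adj (v : V) a))).mp hhall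
  refine ⟨f, hf, fun v => ?_⟩
  have := hmem v
  simp only [Finset.mem_filter] at this
  exact this

lemma aux_matching (G : SimpleGraph V) (A : Finset V) (hA : IsCritIndep G A) :
    (nbhd G A).card ≤ matchNumOn G (A ∪ nbhd G A) := by
  classical
  obtain ⟨f, hfinj, hf⟩ := aux_hall G A hA
  have hd := aux_disj hA.1
  set M : Finset (Sym2 V) :=
    (nbhd G A).attach.image (fun v => s(v.1, f v)) with hMdef
  have hMcard : M.card = (nbhd G A).card := by
    rw [hMdef, Finset.card_image_of_injective, Finset.card_attach]
    intro v w h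
    rw [Sym2.eq_iff] at h
    rcases h with ⟨h1, -⟩ | ⟨h1, h2⟩
    · exact Subtype.ext h1
    · exact absurd v.2 (h1 ▸ hd _ (hf w).1)
  have hmm : IsMatchingSet G M ∧ ∀ e ∈ M, ∀ v ∈ e, v ∈ A ∪ nbhd G A := by
    refine ⟨⟨?_, ?_⟩, ?_⟩
    · intro e he
      obtain ⟨v, -, rfl⟩ := Finset.mem_image.mp he
      exact (hf v).2
    · intro e he e' he' hne u hu hu'
      obtain ⟨v, -, rfl⟩ := Finset.mem_image.mp he
      obtain ⟨w, -, rfl⟩ := Finset.mem_image.mp he'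
      rw [Sym2.mem_iff] at hu hu'
      rcases hu with rfl | rfl <;> rcases hu' with h | h
      · exact hne (by rw [Subtype.ext h])
      · exact hd _ (hf w).1 (h ▸ v.2)
      · exact hd _ (hf v).1 (h.symm ▸ w.2)
      · exact hne (by rw [hfinj h])
    · intro e he u hu
      obtain ⟨v, -, rfl⟩ := Finset.mem_image.mp he
      rw [Sym2.mem_iff] at hu
      rcases hu with rfl | rfl
      · exact Finset.mem_union_right _ v.2
      · exact Finset.mem_union_left _ (hf v).1
  calc (nbhd G A).card = M.card := hMcard.symm
  _ ≤ matchNumOn G (A ∪ nbhd G A) := Finset.le_sup (Finset.mem_filter.mpr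
      ⟨Finset.mem_powerset.mpr (Finset.subset_univ M), hmm⟩)

end AuxLemmas

/-- if `A` is critical independent and `X = A ∪ N(A)`,
then `G[X]` is a König–Egerváry graph. -/
theorem stmt_3 {V : Type*} [Fintype V] (G : SimpleGraph V) (A : Finset V)
    (hA : IsCritIndep G A) :
    indepNumOn G (A ∪ nbhd G A) + matchNumOn G (A ∪ nbhd G A) = (A ∪ nbhd G A).card := by
  classical
  have hupper := aux_upper G (A ∪ nbhd G A)
  have hmatch := aux_matching G A hA
  have hindep : A.card ≤ indepNumOn G (A ∪ nbhd G A) :=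
    Finset.le_sup (Finset.mem_filter.mpr
      ⟨Finset.mem_powerset.mpr Finset.subset_union_left, hA.1⟩)
  have hcard : (A ∪ nbhd G A).card = A.card + (nbhd G A).card :=
    Finset.card_union_of_disjoint (Finset.disjoint_left.mpr (aux_disj hA.1))
  omega
end

section
/- If A is a critical independent set of a graph G and X = A ∪ N(A), then α(G[V - X]) ≤ μ(G[V - X]). -/
open Finset

open scoped Classical

variable {V : Type*}

/-- if `A` is critical independent and `X = A ∪ N(A)`,
then `α(G[V - X]) ≤ μ(G[V - X])`. -/
theorem stmt_4 {V : Type*} [Fintype V] (G : SimpleGraph V) (A X : Finset V)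
    (hA : IsCritIndep G A) (hX : X = A ∪ nbhd G A) :
    indepNumOn G (Finset.univ \ X) ≤ matchNumOn G (Finset.univ \ X) := by
  classical
  set Y := Finset.univ \ X with hY
  apply Finset.sup_le
  intro B hB
  rw [Finset.mem_filter, Finset.mem_powerset] at hB
  obtain ⟨hBsub, hBind⟩ := hB
  have hAX : A ⊆ X := hX ▸ Finset.subset_union_left
  have hNAX : nbhd G A ⊆ X := hX ▸ Finset.subset_union_right
  -- key inequality from criticality
  have key : ∀ S : Finset V, S ⊆ B → S.card ≤ (nbhd G S \ nbhd G A).card := by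
    intro S hSB
    have hSY : S ⊆ Y := hSB.trans hBsub
    have hdisj : Disjoint A S := by
      rw [Finset.disjoint_left]
      intro a haA haS
      have := hSY haS
      rw [hY, Finset.mem_sdiff] at this
      exact this.2 (hAX haA)
    have hle : diffd G (A ∪ S) ≤ critDiff G :=
      Finset.le_sup' (diffd G) (Finset.mem_powerset.2 (Finset.subset_univ _))
    rw [hA.2.symm] at hle
    have hcardU : (A ∪ S).card = A.card + S.card := Finset.card_union_of_disjoint hdisj
    have hnU : nbhd G (A ∪ S) = nbhd G A ∪ nbhd G S := by
      ext v
      simp only [nbhd, Finset.mem_filter, Finset.mem_union, Finset.mem_univ, true_and]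
      constructor
      · rintro ⟨x, hx | hx, hadj⟩
        · exact Or.inl ⟨x, hx, hadj⟩
        · exact Or.inr ⟨x, hx, hadj⟩
      · rintro (⟨x, hx, hadj⟩ | ⟨x, hx, hadj⟩)
        · exact ⟨x, Or.inl hx, hadj⟩
        · exact ⟨x, Or.inr hx, hadj⟩
    have hcardN : (nbhd G S \ nbhd G A).card + (nbhd G A).card
        = (nbhd G A ∪ nbhd G S).card := by
      rw [Finset.union_comm]
      exact Finset.card_sdiff_add_card _ _
    have : (S.card : ℤ) ≤ ((nbhd G S \ nbhd G A).card : ℤ) := by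
      simp only [diffd, hnU, hcardU] at hle
      have h2 : ((nbhd G S \ nbhd G A).card : ℤ) + ((nbhd G A).card : ℤ)
          = ((nbhd G A ∪ nbhd G S).card : ℤ) := by exact_mod_cast hcardN
      push_cast at hle
      linarith
    exact_mod_cast this
  -- the neighborhood system for Hall
  set t : V → Finset V := fun b => Y.filter (fun v => G.Adj v b) with ht
  have hsub : ∀ S : Finset V, S ⊆ B → nbhd G S \ nbhd G A ⊆ S.biUnion t := by
    intro S hSB v hv
    rw [Finset.mem_sdiff] at hv
    obtain ⟨hv1, hv2⟩ := hv
    simp only [nbhd, Finset.mem_filter, Finset.mem_univ, true_and] at hv1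
    obtain ⟨s, hsS, hadj⟩ := hv1
    have hvnA : v ∉ A := by
      intro hvA
      have hsN : s ∈ nbhd G A := by
        simp only [nbhd, Finset.mem_filter, Finset.mem_univ, true_and]
        exact ⟨v, hvA, hadj.symm⟩
      have := (hSB.trans hBsub) hsS
      rw [hY, Finset.mem_sdiff] at this
      exact this.2 (hNAX hsN)
    have hvY : v ∈ Y := by
      rw [hY, Finset.mem_sdiff]
      refine ⟨Finset.mem_univ _, ?_⟩
      rw [hX]
      simp only [Finset.mem_union]
      rintro (h | h)
      · exact hvnA h
      · exact hv2 h
    exact Finset.mem_biUnion.2 ⟨s, hsS, Finset.mem_filter.2 ⟨hvY, hadj⟩⟩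
  -- Hall condition on the subtype
  have hall : ∀ S : Finset {x // x ∈ B}, S.card ≤ (S.biUnion (fun b => t b.1)).card := by
    intro S
    set S' : Finset V := S.image Subtype.val with hS'
    have hS'B : S' ⊆ B := by
      intro v hv
      obtain ⟨⟨w, hw⟩, _, rfl⟩ := Finset.mem_image.1 hv
      exact hw
    have hcard : S'.card = S.card := Finset.card_image_of_injective _ Subtype.val_injective
    have hbi : S'.biUnion t = S.biUnion (fun b => t b.1) := by
      ext v
      simp only [Finset.mem_biUnion, hS', Finset.mem_image]
      constructor
      · rintro ⟨x, ⟨b, hb, rfl⟩, hx⟩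
        exact ⟨b, hb, hx⟩
      · rintro ⟨b, hb, hx⟩
        exact ⟨b.1, ⟨b, hb, rfl⟩, hx⟩
    calc S.card = S'.card := hcard.symm
      _ ≤ (nbhd G S' \ nbhd G A).card := key S' hS'B
      _ ≤ (S'.biUnion t).card := Finset.card_le_card (hsub S' hS'B)
      _ = _ := by rw [hbi]
  obtain ⟨f, hfinj, hfmem⟩ :=
    (Finset.all_card_le_biUnion_card_iff_existsInjective' (fun b : {x // x ∈ B} => t b.1)).1 hall
  have hfY : ∀ b : {x // x ∈ B}, f b ∈ Y := fun b => (Finset.mem_filter.1 (hfmem b)).1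
  have hfadj : ∀ b : {x // x ∈ B}, G.Adj (f b) b.1 := fun b => (Finset.mem_filter.1 (hfmem b)).2
  -- build the matching
  set M : Finset (Sym2 V) := B.attach.image (fun b => s(b.1, f b)) with hM
  have hMcard : M.card = B.card := by
    rw [hM, Finset.card_image_of_injOn, Finset.card_attach]
    intro b _ b' _ heq
    rw [Sym2.eq_iff] at heq
    rcases heq with ⟨h1, h2⟩ | ⟨h1, h2⟩
    · exact Subtype.ext h1
    · exfalso
      exact hBind b.1 b.2 b'.1 b'.2 (h1 ▸ (hfadj b'))
  have hMmem : M ∈ (Finset.univ : Finset (Sym2 V)).powerset.filter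
      (fun M => IsMatchingSet G M ∧ ∀ e ∈ M, ∀ v ∈ e, v ∈ Y) := by
    rw [Finset.mem_filter]
    refine ⟨Finset.mem_powerset.2 (Finset.subset_univ _), ⟨?_, ?_⟩, ?_⟩
    · intro e he
      obtain ⟨b, _, rfl⟩ := Finset.mem_image.1 he
      exact (hfadj b).symm
    · intro e he f' hf' hne v hve hvf'
      obtain ⟨b, _, rfl⟩ := Finset.mem_image.1 he
      obtain ⟨b', _, rfl⟩ := Finset.mem_image.1 hf'
      rw [Sym2.mem_iff] at hve hvf'
      have hbne : b ≠ b' := fun h => hne (by rw [h])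
      rcases hve with rfl | rfl
      · rcases hvf' with h | h
        · exact hbne (Subtype.ext h)
        · exact hBind b.1 b.2 b'.1 b'.2 (h ▸ (hfadj b'))
      · rcases hvf' with h | h
        · exact hBind b'.1 b'.2 b.1 b.2 (h.symm ▸ (hfadj b))
        · exact hbne (hfinj h)
    · intro e he v hve
      obtain ⟨b, _, rfl⟩ := Finset.mem_image.1 he
      rw [Sym2.mem_iff] at hve
      rcases hve with rfl | rfl
      · exact hBsub b.2
      · exact hfY b
  calc B.card = M.card := hMcard.symm
    _ ≤ matchNumOn G Y := Finset.le_sup hMmem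
end

section
/- If A is a critical independent set of a graph G and X = A ∪ N(A), then μ(G[X]) + μ(G[V - X]) = μ(G); in particular, each maximum matching of G[X] can be extended to a maximum matching of G. -/
open Finset

open scoped Classical

variable {V : Type*}

section MyAux

variable [Fintype V]

lemma my_mem_nbhd (G : SimpleGraph V) {A : Finset V} {v : V} :
    v ∈ nbhd G A ↔ ∃ x ∈ A, G.Adj v x := by simp [nbhd]

lemma my_indep_not_nbhd {G : SimpleGraph V} {A : Finset V} (h : IsIndep G A) {a : V}
    (ha : a ∈ A) : a ∉ nbhd G A := by
  rw [my_mem_nbhd]; rintro ⟨x, hx, hadj⟩; exact h a ha x hx hadj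

lemma my_sym2_exists_mem (e : Sym2 V) : ∃ v, v ∈ e := by
  induction e using Sym2.ind with
  | _ a b => exact ⟨a, Sym2.mem_mk_left a b⟩

lemma my_matching_subset {G : SimpleGraph V} {M M' : Finset (Sym2 V)} (h : M' ⊆ M)
    (hM : IsMatchingSet G M) : IsMatchingSet G M' :=
  ⟨fun e he => hM.1 e (h he), fun e he f hf => hM.2 e (h he) f (h hf)⟩

lemma my_matching_card_le {G : SimpleGraph V} {M : Finset (Sym2 V)} {T : Finset V}
    (hM : IsMatchingSet G M) (h : ∀ e ∈ M, ∃ v ∈ e, v ∈ T) : M.card ≤ T.card := by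
  rcases M.eq_empty_or_nonempty with rfl | ⟨e₀, he₀⟩
  · simp
  obtain ⟨v₀, -, -⟩ := h e₀ he₀
  haveI : Nonempty V := ⟨v₀⟩
  set f : Sym2 V → V := fun e => if h : ∃ v ∈ e, v ∈ T then h.choose else Classical.arbitrary V
    with hf
  have hmem : ∀ e ∈ M, f e ∈ e ∧ f e ∈ T := by
    intro e he
    have hx := h e he
    simp only [hf, dif_pos hx]
    exact hx.choose_spec
  apply Finset.card_le_card_of_injOn f (fun e he => (hmem e he).2)
  intro e he e' he' hee
  by_contra hne
  exact hM.2 e he e' he' hne (f e) (hmem e he).1 (hee ▸ (hmem e' he').1)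

lemma my_edge_touch_N {G : SimpleGraph V} {A : Finset V} (hInd : IsIndep G A)
    {e : Sym2 V} (he : e ∈ G.edgeSet) (hv : ∃ v ∈ e, v ∈ A ∪ nbhd G A) :
    ∃ v ∈ e, v ∈ nbhd G A := by
  induction e using Sym2.ind with
  | _ a b =>
    rw [SimpleGraph.mem_edgeSet] at he
    obtain ⟨v, hv1, hv2⟩ := hv
    rw [Sym2.mem_iff] at hv1
    rcases hv1 with rfl | rfl
    · rcases Finset.mem_union.mp hv2 with hvA | hvN
      · exact ⟨b, Sym2.mem_mk_right _ _, (my_mem_nbhd G).mpr ⟨v, hvA, he.symm⟩⟩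
      · exact ⟨v, Sym2.mem_mk_left _ _, hvN⟩
    · rcases Finset.mem_union.mp hv2 with hvA | hvN
      · exact ⟨a, Sym2.mem_mk_left _ _, (my_mem_nbhd G).mpr ⟨v, hvA, he⟩⟩
      · exact ⟨v, Sym2.mem_mk_right _ _, hvN⟩

lemma my_hall_cond {G : SimpleGraph V} {A : Finset V} (hA : IsCritIndep G A)
    (S : Finset ↥(nbhd G A)) :
    S.card ≤ (S.biUnion fun v => A.filter (fun a => G.Adj ↑v a)).card := by
  by_contra hlt
  push_neg at hlt
  set T : Finset V := S.image Subtype.val with hT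
  set B : Finset V := S.biUnion fun v => A.filter (fun a => G.Adj ↑v a) with hB
  set A' : Finset V := A \ B with hA'
  have hTcard : T.card = S.card := Finset.card_image_of_injective _ Subtype.val_injective
  have hTsub : T ⊆ nbhd G A := by
    intro v hv; obtain ⟨w, -, rfl⟩ := Finset.mem_image.mp hv; exact w.2
  have hBsub : B ⊆ A := by
    intro a ha; obtain ⟨v, -, hva⟩ := Finset.mem_biUnion.mp ha; exact (Finset.mem_filter.mp hva).1
  have hN' : nbhd G A' ⊆ nbhd G A \ T := by
    intro v hv
    obtain ⟨a, ha, hadj⟩ := (my_mem_nbhd G).mp hv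
    have haA : a ∈ A := (Finset.mem_sdiff.mp ha).1
    refine Finset.mem_sdiff.mpr ⟨(my_mem_nbhd G).mpr ⟨a, haA, hadj⟩, ?_⟩
    intro hvT
    obtain ⟨w, hwS, rfl⟩ := Finset.mem_image.mp hvT
    exact (Finset.mem_sdiff.mp ha).2
      (Finset.mem_biUnion.mpr ⟨w, hwS, Finset.mem_filter.mpr ⟨haA, hadj⟩⟩)
  have hle : diffd G A' ≤ critDiff G := Finset.le_sup' (diffd G) (Finset.mem_powerset.mpr A'.subset_univ)
  rw [← hA.2] at hle
  have h1 : (A'.card : ℤ) = (A.card : ℤ) - B.card := by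
    rw [Finset.card_sdiff_of_subset hBsub, Nat.cast_sub (Finset.card_le_card hBsub)]
  have h2 : ((nbhd G A').card : ℤ) ≤ ((nbhd G A).card : ℤ) - T.card := by
    have := Finset.card_le_card hN'
    rw [Finset.card_sdiff_of_subset hTsub] at this
    have h3 := Nat.cast_le (α := ℤ) |>.mpr this
    rw [Nat.cast_sub (Finset.card_le_card hTsub)] at h3
    exact h3
  have hTS : (T.card : ℤ) = S.card := by exact_mod_cast hTcard
  have hBlt : (B.card : ℤ) < S.card := by exact_mod_cast hlt
  simp only [diffd] at hle
  omega

lemma my_exists_N_matching {G : SimpleGraph V} {A : Finset V} (hA : IsCritIndep G A) :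
    ∃ M : Finset (Sym2 V), IsMatchingSet G M ∧ (∀ e ∈ M, ∀ v ∈ e, v ∈ A ∪ nbhd G A) ∧
      M.card = (nbhd G A).card := by
  obtain ⟨f, hfinj, hf⟩ := (Finset.all_card_le_biUnion_card_iff_exists_injective
      (fun v : ↥(nbhd G A) => A.filter (fun a => G.Adj ↑v a))).mp (my_hall_cond hA)
  have hfA : ∀ v : ↥(nbhd G A), f v ∈ A ∧ G.Adj ↑v (f v) := by
    intro v; exact Finset.mem_filter.mp (hf v)
  have hne : ∀ (v w : ↥(nbhd G A)), (↑v : V) ≠ f w := by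
    intro v w h
    exact my_indep_not_nbhd hA.1 (hfA w).1 (h ▸ v.2)
  refine ⟨(nbhd G A).attach.image (fun v : ↥(nbhd G A) => s(v.1, f v)), ⟨?_, ?_⟩, ?_, ?_⟩
  · intro e he
    obtain ⟨v, -, rfl⟩ := Finset.mem_image.mp he
    exact (hfA v).2
  · intro e he e' he' hee u hu hu'
    obtain ⟨v, -, rfl⟩ := Finset.mem_image.mp he
    obtain ⟨w, -, rfl⟩ := Finset.mem_image.mp he'
    rw [Sym2.mem_iff] at hu hu'
    rcases hu with rfl | rfl <;> rcases hu' with h | h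
    · exact hee (by rw [Subtype.ext h])
    · exact hne v w h
    · exact hne w v h.symm
    · exact hee (by rw [hfinj h])
  · intro e he u hu
    obtain ⟨v, -, rfl⟩ := Finset.mem_image.mp he
    rw [Sym2.mem_iff] at hu
    rcases hu with rfl | rfl
    · exact Finset.mem_union_right _ v.2
    · exact Finset.mem_union_left _ (hfA v).1
  · rw [Finset.card_image_of_injOn, Finset.card_attach]
    intro v _ w _ h
    rw [Sym2.eq_iff] at h
    rcases h with ⟨h1, -⟩ | ⟨h1, -⟩
    · exact Subtype.ext h1
    · exact absurd h1 (hne v w)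

lemma my_le_matchNumOn {G : SimpleGraph V} {X : Finset V} {M : Finset (Sym2 V)}
    (h1 : IsMatchingSet G M) (h2 : ∀ e ∈ M, ∀ v ∈ e, v ∈ X) : M.card ≤ matchNumOn G X :=
  Finset.le_sup (Finset.mem_filter.mpr ⟨Finset.mem_powerset.mpr M.subset_univ, h1, h2⟩)

lemma my_le_matchNum {G : SimpleGraph V} {M : Finset (Sym2 V)}
    (h1 : IsMatchingSet G M) : M.card ≤ matchNum G :=
  Finset.le_sup (Finset.mem_filter.mpr ⟨Finset.mem_powerset.mpr M.subset_univ, h1⟩)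

lemma my_exists_matchNumOn (G : SimpleGraph V) (X : Finset V) :
    ∃ M : Finset (Sym2 V), IsMatchingSet G M ∧ (∀ e ∈ M, ∀ v ∈ e, v ∈ X) ∧
      M.card = matchNumOn G X := by
  have hne : ((Finset.univ : Finset (Sym2 V)).powerset.filter
      (fun M => IsMatchingSet G M ∧ ∀ e ∈ M, ∀ v ∈ e, v ∈ X)).Nonempty := by
    refine ⟨∅, Finset.mem_filter.mpr ⟨Finset.mem_powerset.mpr (Finset.empty_subset _),
      ⟨fun e he => absurd he (Finset.notMem_empty e), fun e he => absurd he (Finset.notMem_empty e)⟩,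
      fun e he => absurd he (Finset.notMem_empty e)⟩⟩
  obtain ⟨M, hM, hsup⟩ := Finset.exists_mem_eq_sup _ hne Finset.card
  rw [Finset.mem_filter] at hM
  exact ⟨M, hM.2.1, hM.2.2, hsup.symm⟩

lemma my_matchNumOn_le_N {G : SimpleGraph V} {A : Finset V} (hInd : IsIndep G A) :
    matchNumOn G (A ∪ nbhd G A) ≤ (nbhd G A).card := by
  apply Finset.sup_le
  intro M hM
  rw [Finset.mem_filter] at hM
  apply my_matching_card_le hM.2.1
  intro e he
  obtain ⟨v, hv⟩ := my_sym2_exists_mem e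
  exact my_edge_touch_N hInd (hM.2.1.1 e he) ⟨v, hv, hM.2.2 e he v hv⟩

lemma my_union_matching {G : SimpleGraph V} {X : Finset V} {M₁ M₂ : Finset (Sym2 V)}
    (h1 : IsMatchingSet G M₁) (h2 : IsMatchingSet G M₂)
    (hv1 : ∀ e ∈ M₁, ∀ v ∈ e, v ∈ X) (hv2 : ∀ e ∈ M₂, ∀ v ∈ e, v ∉ X) :
    IsMatchingSet G (M₁ ∪ M₂) ∧ (M₁ ∪ M₂).card = M₁.card + M₂.card := by
  have hdisj : Disjoint M₁ M₂ := by
    rw [Finset.disjoint_left]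
    intro e he1 he2
    obtain ⟨v, hv⟩ := my_sym2_exists_mem e
    exact hv2 e he2 v hv (hv1 e he1 v hv)
  refine ⟨⟨?_, ?_⟩, Finset.card_union_of_disjoint hdisj⟩
  · intro e he
    rcases Finset.mem_union.mp he with h | h
    · exact h1.1 e h
    · exact h2.1 e h
  · intro e he f hf hef v hve hvf
    rcases Finset.mem_union.mp he with h | h <;> rcases Finset.mem_union.mp hf with h' | h'
    · exact h1.2 e h f h' hef v hve hvf
    · exact hv2 f h' v hvf (hv1 e h v hve)
    · exact hv2 e h v hve (hv1 f h' v hvf)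
    · exact h2.2 e h f h' hef v hve hvf

lemma my_matchNum_le {G : SimpleGraph V} {A : Finset V} (hInd : IsIndep G A) :
    matchNum G ≤ (nbhd G A).card + matchNumOn G (Finset.univ \ (A ∪ nbhd G A)) := by
  apply Finset.sup_le
  intro M hM
  rw [Finset.mem_filter] at hM
  have hMatch := hM.2
  set X := A ∪ nbhd G A with hX
  have hPQ := Finset.card_filter_add_card_filter_not
    (s := M) (p := fun e => ∃ v ∈ e, v ∈ X)
  set P := M.filter (fun e => ∃ v ∈ e, v ∈ X) with hP
  set Q := M.filter (fun e => ¬ ∃ v ∈ e, v ∈ X) with hQ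
  have hPcard : P.card ≤ (nbhd G A).card := by
    apply my_matching_card_le (my_matching_subset (Finset.filter_subset _ _) hMatch)
    intro e he
    have he' := Finset.mem_filter.mp he
    exact my_edge_touch_N hInd (hMatch.1 e he'.1) he'.2
  have hQcard : Q.card ≤ matchNumOn G (Finset.univ \ X) := by
    apply my_le_matchNumOn (my_matching_subset (Finset.filter_subset _ _) hMatch)
    intro e he v hv
    have he' := Finset.mem_filter.mp he
    have := he'.2
    push_neg at this
    exact Finset.mem_sdiff.mpr ⟨Finset.mem_univ v, this v hv⟩
  omega

end MyAux
/-- `μ(G[X]) + μ(G[V - X]) = μ(G)` for `X = A ∪ N(A)`, `A` critical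
independent; in particular every maximum matching of `G[X]` extends to a
maximum matching of `G`. -/
theorem stmt_5 {V : Type*} [Fintype V] (G : SimpleGraph V) (A X : Finset V)
    (hA : IsCritIndep G A) (hX : X = A ∪ nbhd G A) :
    matchNumOn G X + matchNumOn G (Finset.univ \ X) = matchNum G ∧
    ∀ M : Finset (Sym2 V),
      IsMatchingSet G M → (∀ e ∈ M, ∀ v ∈ e, v ∈ X) → M.card = matchNumOn G X →
      ∃ M' : Finset (Sym2 V), M ⊆ M' ∧ IsMatchingSet G M' ∧ M'.card = matchNum G := by
  subst hX
  set X := A ∪ nbhd G A with hX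
  have hXN : matchNumOn G X = (nbhd G A).card := by
    refine le_antisymm (my_matchNumOn_le_N hA.1) ?_
    obtain ⟨M, h1, h2, h3⟩ := my_exists_N_matching hA
    exact h3 ▸ my_le_matchNumOn h1 h2
  have hmain : matchNumOn G X + matchNumOn G (Finset.univ \ X) = matchNum G := by
    refine le_antisymm ?_ (hXN ▸ my_matchNum_le hA.1)
    obtain ⟨M₁, h11, h12, h13⟩ := my_exists_matchNumOn G X
    obtain ⟨M₂, h21, h22, h23⟩ := my_exists_matchNumOn G (Finset.univ \ X)
    have h22' : ∀ e ∈ M₂, ∀ v ∈ e, v ∉ X := fun e he v hv =>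
      (Finset.mem_sdiff.mp (h22 e he v hv)).2
    obtain ⟨hm, hc⟩ := my_union_matching h11 h21 h12 h22'
    calc matchNumOn G X + matchNumOn G (Finset.univ \ X) = (M₁ ∪ M₂).card := by
          rw [hc, h13, h23]
      _ ≤ matchNum G := my_le_matchNum hm
  refine ⟨hmain, ?_⟩
  intro M hM hMX hMcard
  obtain ⟨M₂, h21, h22, h23⟩ := my_exists_matchNumOn G (Finset.univ \ X)
  have h22' : ∀ e ∈ M₂, ∀ v ∈ e, v ∉ X := fun e he v hv =>
    (Finset.mem_sdiff.mp (h22 e he v hv)).2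
  obtain ⟨hm, hc⟩ := my_union_matching hM h21 hMX h22'
  exact ⟨M ∪ M₂, Finset.subset_union_left, hm, by rw [hc, hMcard, h23, hmain]⟩
end

section
/- For every graph G, the critical difference satisfies d_c(G) ≥ α(G) - μ(G). -/
open Finset

open scoped Classical

variable {V : Type*}

section StmtSixAux

variable [Fintype V] {G : SimpleGraph V}

/-- The set of vertices covered by a set of edges. -/
noncomputable def MVerts [Fintype V] (M : Finset (Sym2 V)) : Finset V :=
  Finset.univ.filter (fun v => ∃ e ∈ M, v ∈ e)

lemma mem_MVerts {M : Finset (Sym2 V)} {v : V} : v ∈ MVerts M ↔ ∃ e ∈ M, v ∈ e := by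
  simp [MVerts]

/-- Vertices of `S` reachable from an `M`-unmatched vertex of `S` by an
`M`-alternating path. -/
inductive Reach (G : SimpleGraph V) (M : Finset (Sym2 V)) (S : Finset V) : V → Prop
  | base (a : V) (haS : a ∈ S) (ham : a ∉ MVerts M) : Reach G M S a
  | step (r w t : V) (hr : Reach G M S r) (hadj : G.Adj r w) (he : s(w, t) ∈ M)
      (ht : t ∈ S) : Reach G M S t

/-- The invariant: there is a matching `M'` of the same size as `M`, covering the
same number of `S`-vertices, leaving `r` uncovered, and differing from `M` only on
edges meeting `T ⊆ S`. -/
def GoodInv [Fintype V] (G : SimpleGraph V) (M : Finset (Sym2 V)) (S : Finset V)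
    (r : V) (T : Finset V) : Prop :=
  T ⊆ S ∧ r ∈ S ∧ ∃ M', IsMatchingSet G M' ∧ M'.card = M.card ∧ r ∉ MVerts M' ∧
    (MVerts M' ∩ S).card = (MVerts M ∩ S).card ∧ MVerts M' ⊆ MVerts M ∪ S ∧
    ∀ e ∈ M, e ∉ M' → ∃ v, v ∈ e ∧ v ∈ T

/-- Fueled, hereditary version of the invariant. -/
def Good [Fintype V] (G : SimpleGraph V) (M : Finset (Sym2 V)) (S : Finset V) :
    ℕ → V → Finset V → Prop
  | 0, _, _ => False
  | n + 1, r, T => GoodInv G M S r T ∧ ∀ t ∈ T, t ≠ r → ∃ T', T' ⊆ T ∧ Good G M S n t T'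

lemma good_mono {M : Finset (Sym2 V)} {S : Finset V} :
    ∀ n r T, Good G M S n r T → Good G M S (n + 1) r T := by
  intro n
  induction n with
  | zero => intro r T h; exact absurd h (by simp [Good])
  | succ n ih =>
    rintro r T ⟨hinv, hered⟩
    refine ⟨hinv, fun t ht htr => ?_⟩
    obtain ⟨T', hT', hg⟩ := hered t ht htr
    exact ⟨T', hT', ih t T' hg⟩

lemma matching_edge_ne {M : Finset (Sym2 V)} (hM : IsMatchingSet G M) {w t : V}
    (he : s(w, t) ∈ M) : G.Adj w t := by
  have := hM.1 _ he
  rwa [SimpleGraph.mem_edgeSet] at this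

/-- Swapping an `M`-edge `s(w,t)` for the edge `s(r,w)`, where `r` is uncovered. -/
lemma swap_matching {M : Finset (Sym2 V)} (hM : IsMatchingSet G M) {r w t : V}
    (he : s(w, t) ∈ M) (hadj : G.Adj r w) (hr : r ∉ MVerts M) :
    IsMatchingSet G (insert s(r, w) (M.erase s(w, t))) ∧
    (insert s(r, w) (M.erase s(w, t))).card = M.card ∧
    MVerts (insert s(r, w) (M.erase s(w, t))) = insert r ((MVerts M).erase t) := by
  have hwt : G.Adj w t := matching_edge_ne hM he
  have hrw : r ≠ w := hadj.ne
  have hrnot : ∀ e ∈ M, r ∉ e := by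
    intro e heM hre
    exact hr (mem_MVerts.mpr ⟨e, heM, hre⟩)
  have hrwM : s(r, w) ∉ M := fun h => hrnot _ h (by simp)
  have hrwM' : s(r, w) ∉ M.erase s(w, t) := fun h => hrwM (Finset.mem_of_mem_erase h)
  have hwonly : ∀ e ∈ M, e ≠ s(w, t) → w ∉ e := by
    intro e heM hne hwe
    exact hM.2 _ he _ heM (fun h => hne h.symm) w (by simp) hwe
  have htonly : ∀ e ∈ M, e ≠ s(w, t) → t ∉ e := by
    intro e heM hne hte
    exact hM.2 _ he _ heM (fun h => hne h.symm) t (by simp) hte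
  refine ⟨⟨?_, ?_⟩, ?_, ?_⟩
  · intro e heM
    rcases Finset.mem_insert.mp heM with rfl | h
    · rwa [SimpleGraph.mem_edgeSet]
    · exact hM.1 _ (Finset.mem_of_mem_erase h)
  · intro e heM f hfM hef v hve hvf
    rcases Finset.mem_insert.mp heM with rfl | he'
    · rcases Finset.mem_insert.mp hfM with rfl | hf'
      · exact hef rfl
      · rcases Sym2.mem_iff.mp hve with rfl | rfl
        · exact hrnot _ (Finset.mem_of_mem_erase hf') hvf
        · exact hwonly _ (Finset.mem_of_mem_erase hf') (Finset.ne_of_mem_erase hf') hvf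
    · rcases Finset.mem_insert.mp hfM with rfl | hf'
      · rcases Sym2.mem_iff.mp hvf with rfl | rfl
        · exact hrnot _ (Finset.mem_of_mem_erase he') hve
        · exact hwonly _ (Finset.mem_of_mem_erase he') (Finset.ne_of_mem_erase he') hve
      · exact hM.2 _ (Finset.mem_of_mem_erase he') _ (Finset.mem_of_mem_erase hf') hef v hve hvf
  · rw [Finset.card_insert_of_notMem hrwM', Finset.card_erase_of_mem he]
    have : 1 ≤ M.card := Finset.card_pos.mpr ⟨_, he⟩
    omega
  · ext v
    rw [Finset.mem_insert, Finset.mem_erase, mem_MVerts, mem_MVerts]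
    constructor
    · rintro ⟨e, heM, hve⟩
      rcases Finset.mem_insert.mp heM with rfl | he'
      · rcases Sym2.mem_iff.mp hve with h | h
        · exact Or.inl h
        · subst h
          exact Or.inr ⟨hwt.ne, ⟨s(v, t), he, by simp⟩⟩
      · refine Or.inr ⟨?_, ⟨e, Finset.mem_of_mem_erase he', hve⟩⟩
        rintro rfl
        exact htonly _ (Finset.mem_of_mem_erase he') (Finset.ne_of_mem_erase he') hve
    · rintro (rfl | ⟨hvt, e, heM, hve⟩)
      · exact ⟨s(v, w), Finset.mem_insert_self _ _, by simp⟩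
      · by_cases hews : e = s(w, t)
        · subst hews
          rcases Sym2.mem_iff.mp hve with h | h
          · subst h
            exact ⟨s(r, v), Finset.mem_insert_self _ _, by simp⟩
          · exact absurd h hvt
        · exact ⟨e, Finset.mem_insert_of_mem (Finset.mem_erase.mpr ⟨hews, heM⟩), hve⟩
lemma good_base {M : Finset (Sym2 V)} {S : Finset V} (hM : IsMatchingSet G M) {a : V}
    (haS : a ∈ S) (ham : a ∉ MVerts M) : Good G M S 1 a {a} := by
  refine ⟨⟨Finset.singleton_subset_iff.mpr haS, haS, M, hM, rfl, ham, rfl,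
    Finset.subset_union_left, fun e he h' => absurd he h'⟩, fun t ht htr => ?_⟩
  exact absurd (Finset.mem_singleton.mp ht) htr

lemma good_step {M : Finset (Sym2 V)} {S : Finset V} (hM : IsMatchingSet G M)
    (hSind : IsIndep G S) {n : ℕ} {r : V} {T : Finset V} {w t : V}
    (hg : Good G M S (n + 1) r T) (hadj : G.Adj r w) (he : s(w, t) ∈ M) (htS : t ∈ S) :
    ∃ m T₂, Good G M S m t T₂ := by
  have hg' := hg
  obtain ⟨⟨hTS, hrS, M', hM', hcard, hrM', hScard, hsub, hpres⟩, hered⟩ := hg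
  by_cases hts : t = r
  · exact ⟨n + 1, T, hts ▸ hg'⟩
  by_cases htT : t ∈ T
  · obtain ⟨T', hT', hgt⟩ := hered t htT hts
    exact ⟨n, T', hgt⟩
  have hwS : w ∉ S := fun hwS => hSind w hwS t htS (matching_edge_ne hM he)
  have hwtM' : s(w, t) ∈ M' := by
    by_contra h
    obtain ⟨v, hv, hvT⟩ := hpres _ he h
    rcases Sym2.mem_iff.mp hv with rfl | rfl
    · exact hwS (hTS hvT)
    · exact htT hvT
  obtain ⟨hm'', hc'', hv''⟩ := swap_matching hM' hwtM' hadj hrM'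
  set M'' := insert s(r, w) (M'.erase s(w, t)) with hM''def
  have htM' : t ∈ MVerts M' := mem_MVerts.mpr ⟨_, hwtM', by simp⟩
  have hrMnot : r ∉ (MVerts M' ∩ S).erase t := fun h =>
    hrM' (Finset.mem_inter.mp (Finset.mem_of_mem_erase h)).1
  refine ⟨n + 2, insert t T,
    ⟨⟨Finset.insert_subset_iff.mpr ⟨htS, hTS⟩, htS, M'', hm'', by rw [hc'', hcard],
      ?_, ?_, ?_, ?_⟩, ?_⟩⟩
  · rw [hv'']
    intro h
    rcases Finset.mem_insert.mp h with h | h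
    · exact hts h
    · exact (Finset.mem_erase.mp h).1 rfl
  · have heq : MVerts M'' ∩ S = insert r ((MVerts M' ∩ S).erase t) := by
      rw [hv'', Finset.insert_inter_of_mem hrS, Finset.erase_inter]
    rw [heq, Finset.card_insert_of_notMem hrMnot,
      Finset.card_erase_of_mem (Finset.mem_inter.mpr ⟨htM', htS⟩)]
    have : 1 ≤ (MVerts M' ∩ S).card :=
      Finset.card_pos.mpr ⟨t, Finset.mem_inter.mpr ⟨htM', htS⟩⟩
    omega
  · rw [hv'']
    intro v hv
    rcases Finset.mem_insert.mp hv with rfl | hv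
    · exact Finset.mem_union_right _ hrS
    · exact hsub (Finset.mem_of_mem_erase hv)
  · intro e heM heM''
    by_cases hews : e = s(w, t)
    · exact ⟨t, by rw [hews]; simp, Finset.mem_insert_self _ _⟩
    · by_cases heM' : e ∈ M'
      · exact absurd (Finset.mem_insert_of_mem (Finset.mem_erase.mpr ⟨hews, heM'⟩)) heM''
      · obtain ⟨v, hv, hvT⟩ := hpres _ heM heM'
        exact ⟨v, hv, Finset.mem_insert_of_mem hvT⟩
  · intro u hu hut
    rcases Finset.mem_insert.mp hu with rfl | huT
    · exact absurd rfl hut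
    by_cases hur : u = r
    · exact ⟨T, Finset.subset_insert _ _, hur ▸ hg'⟩
    · obtain ⟨T', hT', hgu⟩ := hered u huT hur
      exact ⟨T', hT'.trans (Finset.subset_insert _ _), good_mono _ _ _ hgu⟩

lemma reach_free {M : Finset (Sym2 V)} {S : Finset V} (hM : IsMatchingSet G M)
    (hSind : IsIndep G S) {r : V} (hr : Reach G M S r) :
    ∃ n T, Good G M S (n + 1) r T := by
  induction hr with
  | base a haS ham => exact ⟨0, {a}, good_base hM haS ham⟩
  | step r w t hr hadj he htS ih =>
    obtain ⟨n, T, hg⟩ := ih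
    obtain ⟨m, T₂, hg₂⟩ := good_step hM hSind hg hadj he htS
    cases m with
    | zero => exact absurd hg₂ (by simp [Good])
    | succ m => exact ⟨m, T₂, hg₂⟩

lemma reach_mem_S {M : Finset (Sym2 V)} {S : Finset V} {r : V} (hr : Reach G M S r) :
    r ∈ S := by
  induction hr with
  | base a haS _ => exact haS
  | step r w t _ _ _ htS => exact htS

lemma card_le_matchNum {N : Finset (Sym2 V)} (hN : IsMatchingSet G N) :
    N.card ≤ matchNum G :=
  Finset.le_sup (Finset.mem_filter.mpr
    ⟨Finset.mem_powerset.mpr (Finset.subset_univ _), hN⟩)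

/-- Key lemma: every neighbour `w` of a reachable vertex is matched by `M`
to a vertex of `S`. -/
lemma matched_partner {M : Finset (Sym2 V)} {S : Finset V} (hM : IsMatchingSet G M)
    (hMcard : M.card = matchNum G) (hSind : IsIndep G S)
    (hext : ∀ N, IsMatchingSet G N → N.card = matchNum G →
      (MVerts N ∩ S).card ≤ (MVerts M ∩ S).card)
    {r w : V} (hr : Reach G M S r) (hadj : G.Adj w r) :
    ∃ z, z ∈ S ∧ s(w, z) ∈ M := by
  obtain ⟨n, T, hg⟩ := reach_free hM hSind hr
  obtain ⟨⟨hTS, hrS, M', hM', hcard, hrM', hScard, hsub, hpres⟩, -⟩ := hg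
  have hwS : w ∉ S := fun h => hSind w h r hrS hadj
  have hadj' : G.Adj r w := hadj.symm
  have hwM' : w ∈ MVerts M' := by
    by_contra hw
    have hnotrw : s(w, r) ∉ M' := fun h => hrM' (mem_MVerts.mpr ⟨_, h, by simp⟩)
    have hNm : IsMatchingSet G (insert s(w, r) M') := by
      constructor
      · intro e heN
        rcases Finset.mem_insert.mp heN with rfl | h
        · exact (SimpleGraph.mem_edgeSet G).mpr hadj
        · exact hM'.1 _ h
      · intro e heN f hfN hef v hve hvf
        have key : ∀ u : V, u ∈ (s(w, r) : Sym2 V) → ∀ g ∈ M', u ∉ g := by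
          intro u hu g hg hug
          rcases Sym2.mem_iff.mp hu with rfl | rfl
          · exact hw (mem_MVerts.mpr ⟨g, hg, hug⟩)
          · exact hrM' (mem_MVerts.mpr ⟨g, hg, hug⟩)
        rcases Finset.mem_insert.mp heN with rfl | he'
        · rcases Finset.mem_insert.mp hfN with rfl | hf'
          · exact hef rfl
          · exact key v hve _ hf' hvf
        · rcases Finset.mem_insert.mp hfN with rfl | hf'
          · exact key v hvf _ he' hve
          · exact hM'.2 _ he' _ hf' hef v hve hvf
    have h1 : (insert s(w, r) M').card = M'.card + 1 :=
      Finset.card_insert_of_notMem hnotrw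
    have h2 := card_le_matchNum hNm
    omega
  have hwM : w ∈ MVerts M := by
    rcases Finset.mem_union.mp (hsub hwM') with h | h
    · exact h
    · exact absurd h hwS
  obtain ⟨e, heM, hwe⟩ := mem_MVerts.mp hwM
  obtain ⟨z, rfl⟩ := Sym2.mem_iff_exists.mp hwe
  refine ⟨z, ?_, heM⟩
  by_contra hzS
  have hwzM' : s(w, z) ∈ M' := by
    by_contra h
    obtain ⟨v, hv, hvT⟩ := hpres _ heM h
    rcases Sym2.mem_iff.mp hv with rfl | rfl
    · exact hwS (hTS hvT)
    · exact hzS (hTS hvT)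
  obtain ⟨hm'', hc'', hv''⟩ := swap_matching hM' hwzM' hadj' hrM'
  have hcard'' : (insert s(r, w) (M'.erase s(w, z))).card = matchNum G := by
    rw [hc'', hcard, hMcard]
  have hle := hext _ hm'' hcard''
  have heq : MVerts (insert s(r, w) (M'.erase s(w, z))) ∩ S =
      insert r (MVerts M' ∩ S) := by
    rw [hv'', Finset.insert_inter_of_mem hrS, Finset.erase_inter,
      Finset.erase_eq_of_notMem (fun h => hzS (Finset.mem_inter.mp h).2)]
  rw [heq, Finset.card_insert_of_notMem (fun h => hrM' (Finset.mem_inter.mp h).1),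
    hScard] at hle
  omega

end StmtSixAux

/-- `d_c(G) ≥ α(G) - μ(G)`. -/
theorem stmt_6 {V : Type*} [Fintype V] (G : SimpleGraph V) :
    (indepNum G : ℤ) - (matchNum G : ℤ) ≤ critDiff G := by
  classical
  -- a maximum independent set
  have hIne : (Finset.univ.powerset.filter (fun A => IsIndep G A)).Nonempty :=
    ⟨∅, Finset.mem_filter.mpr ⟨Finset.empty_mem_powerset _,
      fun a ha => (Finset.notMem_empty a ha).elim⟩⟩
  obtain ⟨S, hSmem, hSmax⟩ := Finset.exists_max_image _ Finset.card hIne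
  have hSind : IsIndep G S := (Finset.mem_filter.mp hSmem).2
  have hScard : S.card = indepNum G :=
    le_antisymm (Finset.le_sup hSmem) (Finset.sup_le hSmax)
  -- a maximum matching, maximizing the number of covered `S`-vertices
  have hMne : ((Finset.univ : Finset (Sym2 V)).powerset.filter
      (fun N => IsMatchingSet G N)).Nonempty :=
    ⟨∅, Finset.mem_filter.mpr ⟨Finset.empty_mem_powerset _,
      ⟨fun e he => (Finset.notMem_empty e he).elim,
       fun e he => (Finset.notMem_empty e he).elim⟩⟩⟩
  obtain ⟨M₀, hM₀mem, hM₀max⟩ := Finset.exists_max_image _ Finset.card hMne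
  have hM₀card : M₀.card = matchNum G :=
    le_antisymm (Finset.le_sup hM₀mem) (Finset.sup_le hM₀max)
  have h𝓜ne : (((Finset.univ : Finset (Sym2 V)).powerset).filter
      (fun N => IsMatchingSet G N ∧ N.card = matchNum G)).Nonempty :=
    ⟨M₀, Finset.mem_filter.mpr ⟨Finset.mem_powerset.mpr (Finset.subset_univ _),
      (Finset.mem_filter.mp hM₀mem).2, hM₀card⟩⟩
  obtain ⟨M, hMmem, hMmax⟩ :=
    Finset.exists_max_image _ (fun N => (MVerts N ∩ S).card) h𝓜ne
  have hM : IsMatchingSet G M := ((Finset.mem_filter.mp hMmem).2).1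
  have hMcard : M.card = matchNum G := ((Finset.mem_filter.mp hMmem).2).2
  have hext : ∀ N, IsMatchingSet G N → N.card = matchNum G →
      (MVerts N ∩ S).card ≤ (MVerts M ∩ S).card := fun N h1 h2 =>
    hMmax N (Finset.mem_filter.mpr
      ⟨Finset.mem_powerset.mpr (Finset.subset_univ _), h1, h2⟩)
  set A := S \ MVerts M with hA
  set R := Finset.univ.filter (Reach G M S) with hRdef
  have hRS : R ⊆ S := fun r hr => reach_mem_S (Finset.mem_filter.mp hr).2
  have hAR : A ⊆ R := fun a ha => Finset.mem_filter.mpr ⟨Finset.mem_univ _,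
    Reach.base a (Finset.mem_sdiff.mp ha).1 (Finset.mem_sdiff.mp ha).2⟩
  -- every neighbour of `R` pairs off with a distinct matched vertex of `R`
  have hNR : (nbhd G R).card ≤ (R ∩ MVerts M).card := by
    have hpart : ∀ w, ∃ z, w ∈ nbhd G R → z ∈ R ∩ MVerts M ∧ s(w, z) ∈ M := by
      intro w
      by_cases hw : w ∈ nbhd G R
      · have hw' : ∃ x ∈ R, G.Adj w x := by
          simpa [nbhd] using hw
        obtain ⟨x, hxR, hadj⟩ := hw'
        have hxReach : Reach G M S x := (Finset.mem_filter.mp hxR).2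
        obtain ⟨z, hzS, hzM⟩ := matched_partner hM hMcard hSind hext hxReach hadj
        refine ⟨z, fun _ => ⟨Finset.mem_inter.mpr ⟨?_,
          mem_MVerts.mpr ⟨_, hzM, by simp⟩⟩, hzM⟩⟩
        exact Finset.mem_filter.mpr ⟨Finset.mem_univ _,
          Reach.step x w z hxReach hadj.symm hzM hzS⟩
      · exact ⟨w, fun h => absurd h hw⟩
    choose f hf using hpart
    apply Finset.card_le_card_of_injOn f
      (fun w hw => (hf w hw).1)
    intro w1 h1 w2 h2 hfe
    have e1 := (hf w1 (Finset.mem_coe.mp h1)).2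
    have e2 := (hf w2 (Finset.mem_coe.mp h2)).2
    rw [hfe] at e1
    by_cases he : s(w1, f w2) = s(w2, f w2)
    · exact Sym2.congr_left.mp he
    · exact absurd (by simp : f w2 ∈ s(w2, f w2))
        (hM.2 _ e1 _ e2 he (f w2) (by simp))
  have hRA : R ∩ MVerts M = R \ A := by
    ext r
    rw [Finset.mem_inter, Finset.mem_sdiff]
    constructor
    · rintro ⟨hrR, hrM⟩
      exact ⟨hrR, fun h => (Finset.mem_sdiff.mp h).2 hrM⟩
    · rintro ⟨hrR, hrA⟩
      refine ⟨hrR, ?_⟩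
      by_contra h
      exact hrA (Finset.mem_sdiff.mpr ⟨hRS hrR, h⟩)
  have hcount1 : (nbhd G R).card + A.card ≤ R.card := by
    have h3 : (R \ A).card + A.card = R.card := Finset.card_sdiff_add_card_eq_card hAR
    rw [hRA] at hNR
    omega
  -- the matched vertices of S inject into M
  have hSM : (S ∩ MVerts M).card ≤ M.card := by
    have hpick : ∀ v, ∃ e, v ∈ S ∩ MVerts M → e ∈ M ∧ v ∈ e := by
      intro v
      by_cases hv : v ∈ S ∩ MVerts M
      · obtain ⟨e, heM, hve⟩ := mem_MVerts.mp (Finset.mem_inter.mp hv).2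
        exact ⟨e, fun _ => ⟨heM, hve⟩⟩
      · exact ⟨s(v, v), fun h => absurd h hv⟩
    choose g hg using hpick
    apply Finset.card_le_card_of_injOn g (fun v hv => (hg v hv).1)
    intro v1 h1 v2 h2 hge
    by_contra hne
    have e1 := hg v1 (Finset.mem_coe.mp h1)
    have e2 := hg v2 (Finset.mem_coe.mp h2)
    rw [hge] at e1
    obtain ⟨c, hc⟩ := Sym2.mem_iff_exists.mp e1.2
    have hv2c : v2 = c := by
      rcases Sym2.mem_iff.mp (hc ▸ e2.2) with h | h
      · exact absurd h.symm hne
      · exact h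
    have : G.Adj v1 v2 := by
      have := matching_edge_ne hM (hc ▸ e2.1)
      rwa [← hv2c] at this
    exact hSind v1 (Finset.mem_inter.mp (Finset.mem_coe.mp h1)).1 v2
      (Finset.mem_inter.mp (Finset.mem_coe.mp h2)).1 this
  have hcount2 : S.card ≤ A.card + M.card := by
    have h5 : A.card = (S \ MVerts M).card := by rw [hA]
    have hsub : S ∩ MVerts M ⊆ S := Finset.inter_subset_left
    have h4 : (S \ (S ∩ MVerts M)).card + (S ∩ MVerts M).card = S.card :=
      Finset.card_sdiff_add_card_eq_card hsub
    rw [Finset.sdiff_inter_self_left] at h4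
    omega
  have hfinal : (S.card : ℤ) - (M.card : ℤ) ≤ diffd G R := by
    rw [diffd]
    omega
  have hle' : diffd G R ≤ critDiff G :=
    Finset.le_sup' (diffd G) (Finset.mem_powerset.mpr (Finset.subset_univ R))
  rw [← hScard, ← hMcard]
  exact le_trans hfinal hle'
end

section
/- For every graph G without isolated vertices, |ker(G)| ≥ d_c(G) ≥ α(G) - μ(G), where ker(G) is the intersection of all critical independent sets. -/
open Finset

open scoped Classical

variable {V : Type*}

section AuxStmt8

variable [Fintype V] (G : SimpleGraph V)

lemma mem_nbhd_aux8 (X : Finset V) (v : V) : v ∈ nbhd G X ↔ ∃ x ∈ X, G.Adj v x := by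
  simp [nbhd]

lemma nbhd_union_aux8 (A B : Finset V) : nbhd G (A ∪ B) = nbhd G A ∪ nbhd G B := by
  ext v
  simp only [mem_nbhd_aux8, Finset.mem_union]
  constructor
  · rintro ⟨x, hx | hx, ha⟩
    · exact Or.inl ⟨x, hx, ha⟩
    · exact Or.inr ⟨x, hx, ha⟩
  · rintro (⟨x, hx, ha⟩ | ⟨x, hx, ha⟩)
    · exact ⟨x, Or.inl hx, ha⟩
    · exact ⟨x, Or.inr hx, ha⟩

lemma nbhd_inter_subset_aux8 (A B : Finset V) :
    nbhd G (A ∩ B) ⊆ nbhd G A ∩ nbhd G B := by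
  intro v hv
  rw [mem_nbhd_aux8] at hv
  obtain ⟨x, hx, ha⟩ := hv
  rw [Finset.mem_inter] at hx
  rw [Finset.mem_inter, mem_nbhd_aux8, mem_nbhd_aux8]
  exact ⟨⟨x, hx.1, ha⟩, ⟨x, hx.2, ha⟩⟩

lemma diffd_le_critDiff_aux8 (X : Finset V) : diffd G X ≤ critDiff G :=
  Finset.le_sup' (f := diffd G) (Finset.mem_powerset.mpr (Finset.subset_univ X))

lemma critDiff_nonneg_aux8 : 0 ≤ critDiff G := by
  have h := diffd_le_critDiff_aux8 G ∅
  have h0 : diffd G ∅ = 0 := by simp [diffd, nbhd]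
  omega

lemma diffd_supermod_aux8 (A B : Finset V) :
    diffd G A + diffd G B ≤ diffd G (A ∪ B) + diffd G (A ∩ B) := by
  have h1 : (A ∪ B).card + (A ∩ B).card = A.card + B.card :=
    Finset.card_union_add_card_inter A B
  have h2 : (nbhd G (A ∪ B)).card + (nbhd G (A ∩ B)).card ≤
      (nbhd G A).card + (nbhd G B).card := by
    rw [nbhd_union_aux8]
    have h3 := Finset.card_le_card (nbhd_inter_subset_aux8 G A B)
    have h4 := Finset.card_union_add_card_inter (nbhd G A) (nbhd G B)
    omega
  unfold diffd
  omega

lemma critIndep_inter_aux8 {A B : Finset V} (hA : IsCritIndep G A) (hB : IsCritIndep G B) :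
    IsCritIndep G (A ∩ B) := by
  refine ⟨fun a ha b hb => hA.1 a (Finset.mem_inter.mp ha).1 b (Finset.mem_inter.mp hb).1, ?_⟩
  have h1 := diffd_supermod_aux8 G A B
  have h2 := diffd_le_critDiff_aux8 G (A ∪ B)
  have h3 := diffd_le_critDiff_aux8 G (A ∩ B)
  rw [hA.2, hB.2] at h1
  omega

lemma inf'_crit_aux8 :
    ∀ (F : Finset (Finset V)) (hF : F.Nonempty), (∀ A ∈ F, IsCritIndep G A) →
      IsCritIndep G (F.inf' hF id) := by
  intro F hF
  induction hF using Finset.Nonempty.cons_induction with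
  | singleton a => intro h; simpa using h a (by simp)
  | cons a s ha hs ih =>
    intro h
    rw [Finset.inf'_cons hs, Finset.inf_eq_inter]
    exact critIndep_inter_aux8 G (h a (Finset.mem_cons_self a s))
      (ih fun A hA => h A (Finset.mem_cons_of_mem hA))

end AuxStmt8

/-- `|ker(G)| ≥ d_c(G) ≥ α(G) - μ(G)`. -/
theorem stmt_8 {V : Type*} [Fintype V] (G : SimpleGraph V) (hiso : NoIsolated G) :
    critDiff G ≤ ((kerG G).card : ℤ) ∧
    (indepNum G : ℤ) - (matchNum G : ℤ) ≤ critDiff G := by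
  constructor
  · -- Part 1: critDiff ≤ |ker|
    by_cases hex : ∃ A, IsCritIndep G A
    · obtain ⟨A0, hA0⟩ := hex
      set F : Finset (Finset V) :=
        Finset.univ.filter (fun A : Finset V => IsCritIndep G A) with hFdef
      have hF : F.Nonempty := ⟨A0, by simp [hFdef, hA0]⟩
      have hmem : ∀ A ∈ F, IsCritIndep G A := fun A hA => (Finset.mem_filter.mp hA).2
      have hJ : IsCritIndep G (F.inf' hF id) := inf'_crit_aux8 G F hF hmem
      have hker : kerG G = F.inf' hF id := by
        ext v
        simp only [kerG, Finset.mem_filter, Finset.mem_univ, true_and]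
        constructor
        · intro h
          have hsub : {v} ≤ F.inf' hF id :=
            Finset.le_inf' hF id
              (fun A hA => Finset.singleton_subset_iff.mpr (h A (hmem A hA)))
          exact Finset.singleton_subset_iff.mp hsub
        · intro h A hA
          have hle : F.inf' hF id ≤ A := by
            have hAF : A ∈ F := by simp [hFdef, hA]
            exact Finset.inf'_le id hAF
          exact hle h
      rw [hker]
      have h2 := hJ.2
      unfold diffd at h2
      omega
    · have hker : kerG G = Finset.univ := by
        ext v
        simp only [kerG, Finset.mem_filter, Finset.mem_univ, true_and, iff_true]
        exact fun A hA => absurd ⟨A, hA⟩ hex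
      rw [hker]
      apply Finset.sup'_le
      intro X hX
      have h1 : X.card ≤ Finset.univ.card := Finset.card_le_card (Finset.subset_univ X)
      unfold diffd
      omega
  · -- Part 2: α - μ ≤ critDiff
    set D : ℕ := (critDiff G).toNat with hDdef
    have hDcast : (D : ℤ) = critDiff G := Int.toNat_of_nonneg (critDiff_nonneg_aux8 G)
    obtain ⟨S, hS, hval⟩ :=
      Finset.exists_mem_eq_sup (Finset.univ.powerset.filter (fun A => IsIndep G A))
        ⟨∅, by simp [IsIndep]⟩ Finset.card
    have hSind : IsIndep G S := (Finset.mem_filter.mp hS).2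
    -- Hall family
    set t : {x // x ∈ S} → Finset (V ⊕ Fin D) :=
      (fun x => ((nbhd G {x.1}).image Sum.inl) ∪ (Finset.univ.image Sum.inr)) with htdef
    have hall : ∀ s : Finset {x // x ∈ S}, s.card ≤ (s.biUnion t).card := by
      intro s
      rcases s.eq_empty_or_nonempty with rfl | hne
      · simp
      · set W : Finset V := s.image Subtype.val with hWdef
        have hsub : ((nbhd G W).image Sum.inl ∪
            (Finset.univ : Finset (Fin D)).image Sum.inr) ⊆ s.biUnion t := by
          intro u hu
          rw [Finset.mem_union] at hu
          rcases hu with hu | hu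
          · rw [Finset.mem_image] at hu
            obtain ⟨v, hv, rfl⟩ := hu
            rw [mem_nbhd_aux8] at hv
            obtain ⟨x, hx, hadj⟩ := hv
            rw [hWdef, Finset.mem_image] at hx
            obtain ⟨y, hy, rfl⟩ := hx
            rw [Finset.mem_biUnion]
            refine ⟨y, hy, ?_⟩
            rw [htdef]
            simp only [Finset.mem_union, Finset.mem_image]
            exact Or.inl ⟨v, by rw [mem_nbhd_aux8]; exact ⟨y.1, Finset.mem_singleton_self _, hadj⟩, rfl⟩
          · obtain ⟨y, hy⟩ := hne
            rw [Finset.mem_biUnion]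
            refine ⟨y, hy, ?_⟩
            rw [htdef]
            simp only [Finset.mem_union]
            exact Or.inr hu
        have hdisj : Disjoint ((nbhd G W).image (Sum.inl : V → V ⊕ Fin D))
            ((Finset.univ : Finset (Fin D)).image Sum.inr) := by
          rw [Finset.disjoint_left]
          rintro a ha hb
          rw [Finset.mem_image] at ha hb
          obtain ⟨v, _, rfl⟩ := ha
          obtain ⟨w, _, h⟩ := hb
          exact Sum.inl_ne_inr h.symm
        have hcard : ((nbhd G W).image (Sum.inl : V → V ⊕ Fin D) ∪
            (Finset.univ : Finset (Fin D)).image Sum.inr).card = (nbhd G W).card + D := by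
          rw [Finset.card_union_of_disjoint hdisj,
            Finset.card_image_of_injective _ Sum.inl_injective,
            Finset.card_image_of_injective _ Sum.inr_injective]
          simp
        have hW : W.card = s.card := Finset.card_image_of_injective s Subtype.val_injective
        have hd := diffd_le_critDiff_aux8 G W
        unfold diffd at hd
        have hle := Finset.card_le_card hsub
        rw [hcard] at hle
        omega
    obtain ⟨g, ginj, hg⟩ := (Finset.all_card_le_biUnion_card_iff_exists_injective t).mp hall
    set f : {x // x ∈ S} → V := fun x => Sum.elim id (fun _ => x.1) (g x) with hfdef
    set L : Finset {x // x ∈ S} := Finset.univ.filter (fun x => (g x).isLeft) with hLdef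
    have hgL : ∀ x ∈ L, g x = Sum.inl (f x) := by
      intro x hx
      rw [hLdef, Finset.mem_filter] at hx
      rcases hgx : g x with v | w
      · rw [hfdef]; simp [hgx]
      · rw [hgx] at hx; simp at hx
    have key : ∀ x ∈ L, G.Adj (f x) x.1 := by
      intro x hx
      have h1 := hg x
      rw [hgL x hx, htdef] at h1
      simp only [Finset.mem_union, Finset.mem_image] at h1
      rcases h1 with ⟨v, hv, hveq⟩ | ⟨w, _, hweq⟩
      · obtain rfl : v = f x := Sum.inl_injective hveq
        rw [mem_nbhd_aux8] at hv
        obtain ⟨y, hy, hadj⟩ := hv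
        rwa [Finset.mem_singleton.mp hy] at hadj
      · exact absurd hweq (Sum.inr_ne_inl)
    have fnotinS : ∀ x ∈ L, f x ∉ S := by
      intro x hx hmem
      exact hSind (f x) hmem x.1 x.2 (key x hx)
    set M : Finset (Sym2 V) := L.image (fun x => s(x.1, f x)) with hMdef
    have pairinj : ∀ x ∈ L, ∀ y ∈ L, s(x.1, f x) = s(y.1, f y) → x = y := by
      intro x hx y hy heq
      rw [Sym2.eq_iff] at heq
      rcases heq with ⟨h1, h2⟩ | ⟨h1, h2⟩
      · exact Subtype.ext h1
      · exact absurd (h1 ▸ x.2 : (f y) ∈ S) (fnotinS y hy)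
    have hmatch : IsMatchingSet G M := by
      constructor
      · intro e he
        rw [hMdef, Finset.mem_image] at he
        obtain ⟨x, hx, rfl⟩ := he
        rw [SimpleGraph.mem_edgeSet]
        exact (key x hx).symm
      · intro e he f' hf' hne v hve hvf'
        rw [hMdef, Finset.mem_image] at he hf'
        obtain ⟨x, hx, rfl⟩ := he
        obtain ⟨y, hy, rfl⟩ := hf'
        rw [Sym2.mem_iff] at hve hvf'
        have hxy : x ≠ y := fun h => hne (by rw [h])
        rcases hve with rfl | rfl
        · rcases hvf' with h | h
          · exact hxy (Subtype.ext h)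
          · exact fnotinS y hy (h ▸ x.2)
        · rcases hvf' with h | h
          · exact fnotinS x hx (h ▸ y.2)
          · exact hxy (ginj (by rw [hgL x hx, hgL y hy, h]))
    have hMcard : M.card = L.card := by
      rw [hMdef]
      apply Finset.card_image_of_injOn
      intro x hx y hy heq
      exact pairinj x hx y hy heq
    have hMle : M.card ≤ matchNum G := by
      apply Finset.le_sup
      rw [Finset.mem_filter]
      exact ⟨Finset.mem_powerset.mpr (Finset.subset_univ M), hmatch⟩
    -- complement bound
    have hLc : (Finset.univ.filter (fun x : {x // x ∈ S} => ¬ (g x).isLeft)).card ≤ D := by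
      set Lc := Finset.univ.filter (fun x : {x // x ∈ S} => ¬ (g x).isLeft) with hLcdef
      have himg : Lc.image g ⊆ (Finset.univ : Finset (Fin D)).image Sum.inr := by
        intro u hu
        rw [Finset.mem_image] at hu
        obtain ⟨x, hx, rfl⟩ := hu
        rw [hLcdef, Finset.mem_filter] at hx
        rcases hgx : g x with v | w
        · rw [hgx] at hx; simp at hx
        · simp
      have h1 : (Lc.image g).card = Lc.card :=
        Finset.card_image_of_injective Lc ginj
      have h2 := Finset.card_le_card himg
      rw [h1, Finset.card_image_of_injective _ Sum.inr_injective, Finset.card_univ,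
        Fintype.card_fin] at h2
      exact h2
    have hsplit : L.card +
        (Finset.univ.filter (fun x : {x // x ∈ S} => ¬ (g x).isLeft)).card =
        Fintype.card {x // x ∈ S} := by
      rw [hLdef]
      rw [← Fintype.card_coe S] at *
      exact Finset.card_filter_add_card_filter_not _
    have hcardS : Fintype.card {x // x ∈ S} = S.card := Fintype.card_coe S
    have halpha : indepNum G = S.card := hval
    omega
end

section
/- If A is a critical independent set of G contained in a maximum independent set S, then every subset B of S - A satisfies |B| ≤ |N(B)|. -/
open Finset

open scoped Classical

variable {V : Type*}

/-- if `A` is a critical independent set contained in a maximum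
independent set `S`, then every `B ⊆ S - A` satisfies `|B| ≤ |N(B)|`. -/
theorem stmt_15 {V : Type*} [Fintype V] (G : SimpleGraph V) (A S B : Finset V)
    (hA : IsCritIndep G A) (hS : IsMaxIndep G S) (hAS : A ⊆ S) (hB : B ⊆ S \ A) :
    B.card ≤ (nbhd G B).card := by
  have hle : diffd G (A ∪ B) ≤ diffd G A := by
    rw [hA.2]
    exact Finset.le_sup' (diffd G) (Finset.mem_powerset.2 (Finset.subset_univ _))
  have hdisj : Disjoint A B := by
    refine Finset.disjoint_left.2 fun x hxA hxB => ?_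
    exact (Finset.mem_sdiff.1 (hB hxB)).2 hxA
  have hcard : (A ∪ B).card = A.card + B.card := Finset.card_union_of_disjoint hdisj
  have hnb : nbhd G (A ∪ B) ⊆ nbhd G A ∪ nbhd G B := by
    intro v hv
    simp only [nbhd, Finset.mem_filter, Finset.mem_union, Finset.mem_univ, true_and] at hv ⊢
    obtain ⟨x, hx, hadj⟩ := hv
    rcases hx with h | h
    · exact Or.inl ⟨x, h, hadj⟩
    · exact Or.inr ⟨x, h, hadj⟩
  have hnbc : (nbhd G (A ∪ B)).card ≤ (nbhd G A).card + (nbhd G B).card :=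
    le_trans (Finset.card_le_card hnb) (Finset.card_union_le _ _)
  simp only [diffd, hcard] at hle
  push_cast at hle ⊢
  omega
end

section
/- For every graph G, the maximum of |X| - |N(X)| over all subsets X ⊆ V(G) is attained at some independent set, i.e., d_c(G) = id_c(G). -/
open Finset

open scoped Classical

variable {V : Type*}

/-- The critical independence difference `id_c(G)`:
the maximum of `d` over independent sets. -/
noncomputable def idCritDiff {V : Type*} [Fintype V] (G : SimpleGraph V) : ℤ :=
  (Finset.univ.powerset.filter (fun A => IsIndep G A)).sup'
    ⟨∅, by simp [IsIndep]⟩ (diffd G)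

lemma key_lemma {V : Type*} [Fintype V] (G : SimpleGraph V) (X : Finset V) :
    IsIndep G (X \ nbhd G X) ∧ diffd G X ≤ diffd G (X \ nbhd G X) := by
  classical
  set N := nbhd G X with hN
  constructor
  · intro a ha b hb hab
    have : a ∈ N := by
      simp only [hN, nbhd, mem_filter, mem_univ, true_and]
      exact ⟨b, (mem_sdiff.mp hb).1, hab⟩
    exact (mem_sdiff.mp ha).2 this
  · have hsub : nbhd G (X \ N) ⊆ N \ X := by
      intro y hy
      simp only [nbhd, mem_filter, mem_univ, true_and] at hy
      obtain ⟨i, hi, hadj⟩ := hy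
      rw [mem_sdiff] at hi
      rw [mem_sdiff]
      refine ⟨?_, ?_⟩
      · simp only [hN, nbhd, mem_filter, mem_univ, true_and]
        exact ⟨i, hi.1, hadj⟩
      · intro hyX
        exact hi.2 (by
          simp only [hN, nbhd, mem_filter, mem_univ, true_and]
          exact ⟨y, hyX, hadj.symm⟩)
    have h1 : (X \ N).card + (X ∩ N).card = X.card :=
      Finset.card_sdiff_add_card_inter X N
    have h2 : (N \ X).card + (N ∩ X).card = N.card :=
      Finset.card_sdiff_add_card_inter N X
    have h3 : (X ∩ N).card = (N ∩ X).card := by rw [Finset.inter_comm]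
    have h4 : (nbhd G (X \ N)).card ≤ (N \ X).card := Finset.card_le_card hsub
    unfold diffd
    rw [← hN]
    omega

/-- `d_c(G) = id_c(G)`, i.e. the maximum of `|X| - |N(X)|` over
all subsets is attained at some independent set. -/
theorem stmt_16 {V : Type*} [Fintype V] (G : SimpleGraph V) :
    critDiff G = idCritDiff G ∧
    ∃ I : Finset V, IsIndep G I ∧ diffd G I = critDiff G := by
  classical
  obtain ⟨X, hXmem, hXeq⟩ :=
    Finset.exists_mem_eq_sup' (⟨∅, Finset.empty_mem_powerset _⟩ :
      (Finset.univ.powerset : Finset (Finset V)).Nonempty) (diffd G)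
  obtain ⟨hIndep, hle⟩ := key_lemma G X
  set I := X \ nbhd G X with hI
  have hImem : I ∈ Finset.univ.powerset.filter (fun A => IsIndep G A) := by
    simp [hIndep]
  have hidle : idCritDiff G ≤ critDiff G := by
    apply Finset.sup'_le
    intro A hA
    exact Finset.le_sup' (diffd G) (Finset.mem_of_mem_filter A hA)
  have hIle : diffd G I ≤ idCritDiff G := Finset.le_sup' (diffd G) hImem
  have hcrit : critDiff G ≤ diffd G I := le_trans (le_of_eq hXeq) hle
  have heq : critDiff G = idCritDiff G := le_antisymm (le_trans hcrit hIle) hidle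
  exact ⟨heq, I, hIndep, le_antisymm (hIle.trans hidle) hcrit⟩
end

section
/- If A is a critical independent set of G, then A is a local maximum independent set, i.e., A is a maximum independent set of the subgraph induced by N[A]. -/
open Finset

open scoped Classical

variable {V : Type*}

/-- every critical independent set is a local maximum independent
set, i.e. a maximum independent set of `G[N[A]]`. -/
theorem stmt_19 {V : Type*} [Fintype V] (G : SimpleGraph V) (A : Finset V)
    (hA : IsCritIndep G A) :
    A.card = indepNumOn G (A ∪ nbhd G A) := by
  obtain ⟨hInd, hCrit⟩ := hA
  have hmax : ∀ X : Finset V, diffd G X ≤ diffd G A := by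
    intro X
    rw [hCrit]
    exact Finset.le_sup' (diffd G) (Finset.mem_powerset.2 (Finset.subset_univ X))
  -- Hall condition on N(A)
  have hall : ∀ S : Finset V, S ⊆ nbhd G A →
      S.card ≤ (S.biUnion (fun v => A.filter (fun a => G.Adj v a))).card := by
    intro S hS
    set T := S.biUnion (fun v => A.filter (fun a => G.Adj v a)) with hT
    have hTA : T ⊆ A := by
      intro x hx
      obtain ⟨v, _, hx⟩ := Finset.mem_biUnion.1 hx
      exact (Finset.mem_filter.1 hx).1
    have hsub : nbhd G (A \ T) ⊆ nbhd G A \ S := by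
      intro v hv
      obtain ⟨x, hx, hadj⟩ : ∃ x ∈ A \ T, G.Adj v x := by
        simpa [nbhd] using hv
      rw [Finset.mem_sdiff] at hx ⊢
      constructor
      · simp only [nbhd, Finset.mem_filter, Finset.mem_univ, true_and]
        exact ⟨x, hx.1, hadj⟩
      · intro hvS
        exact hx.2 (Finset.mem_biUnion.2 ⟨v, hvS, Finset.mem_filter.2 ⟨hx.1, hadj⟩⟩)
    have h1 : (nbhd G (A \ T)).card ≤ (nbhd G A \ S).card := Finset.card_le_card hsub
    have h1' : (nbhd G A \ S).card = (nbhd G A).card - S.card := Finset.card_sdiff_of_subset hS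
    have h2 := hmax (A \ T)
    have hcardsd : (A \ T).card = A.card - T.card := Finset.card_sdiff_of_subset hTA
    have hTle : T.card ≤ A.card := Finset.card_le_card hTA
    have hSle : S.card ≤ (nbhd G A).card := Finset.card_le_card hS
    simp only [diffd, hcardsd] at h2
    omega
  -- Get a matching from N(A) into A via Hall's theorem
  obtain ⟨f, hfinj, hf⟩ := (Finset.all_card_le_biUnion_card_iff_exists_injective
      (fun v : ↑(nbhd G A) => A.filter (fun a => G.Adj v a))).1 (by
    intro s
    have hsub : (s.image (fun x : ↑(nbhd G A) => (x : V))) ⊆ nbhd G A := by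
      intro x hx
      obtain ⟨y, _, rfl⟩ := Finset.mem_image.1 hx
      exact y.2
    have := hall _ hsub
    have himg : (s.image (fun x : ↑(nbhd G A) => (x : V))).card = s.card :=
      Finset.card_image_of_injective _ Subtype.val_injective
    have hbi : ((s.image (fun x : ↑(nbhd G A) => (x : V))).biUnion
        (fun v => A.filter (fun a => G.Adj v a)))
        = s.biUnion (fun v : ↑(nbhd G A) => A.filter (fun a => G.Adj (v : V) a)) := by
      ext x
      simp [Finset.mem_biUnion]
    rw [himg, hbi] at this
    exact this)
  -- f : ↑(nbhd G A) → V injective, f v ∈ A, Adj v (f v)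
  have hfA : ∀ v : ↑(nbhd G A), f v ∈ A := fun v => (Finset.mem_filter.1 (hf v)).1
  have hfadj : ∀ v : ↑(nbhd G A), G.Adj (v : V) (f v) := fun v => (Finset.mem_filter.1 (hf v)).2
  -- any independent subset of N[A] has card ≤ |A|
  have key : ∀ B : Finset V, B ⊆ A ∪ nbhd G A → IsIndep G B → B.card ≤ A.card := by
    intro B hBsub hBind
    classical
    set g : V → V := fun b => if hb : b ∈ A then b else
      (if hb' : b ∈ nbhd G A then f ⟨b, hb'⟩ else b) with hg
    apply Finset.card_le_card_of_injOn g
    · intro b hb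
      by_cases hbA : b ∈ A
      · simpa [hg, hbA]
      · have hb' : b ∈ nbhd G A := by
          rcases Finset.mem_union.1 (hBsub hb) with h | h
          · exact absurd h hbA
          · exact h
        simpa [hg, hbA, hb'] using hfA ⟨b, hb'⟩
    · intro b hb c hc hbc
      by_cases hbA : b ∈ A <;> by_cases hcA : c ∈ A
      · simpa [hg, hbA, hcA] using hbc
      · have hc' : c ∈ nbhd G A := by
          rcases Finset.mem_union.1 (hBsub hc) with h | h
          · exact absurd h hcA
          · exact h
        simp only [hg, hbA, hcA, hc', dif_pos, dif_neg, not_false_iff] at hbc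
        exfalso
        have : G.Adj c b := hbc ▸ hfadj ⟨c, hc'⟩
        exact hBind c hc b hb this
      · have hb' : b ∈ nbhd G A := by
          rcases Finset.mem_union.1 (hBsub hb) with h | h
          · exact absurd h hbA
          · exact h
        simp only [hg, hbA, hcA, hb', dif_pos, dif_neg, not_false_iff] at hbc
        exfalso
        have : G.Adj b c := hbc ▸ hfadj ⟨b, hb'⟩
        exact hBind b hb c hc this
      · have hb' : b ∈ nbhd G A := by
          rcases Finset.mem_union.1 (hBsub hb) with h | h
          · exact absurd h hbA
          · exact h
        have hc' : c ∈ nbhd G A := by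
          rcases Finset.mem_union.1 (hBsub hc) with h | h
          · exact absurd h hcA
          · exact h
        simp only [hg, hbA, hcA, hb', hc', dif_pos, dif_neg, not_false_iff] at hbc
        exact Subtype.ext_iff.1 (hfinj hbc)
  -- conclude
  apply le_antisymm
  · apply Finset.le_sup (f := Finset.card)
    refine Finset.mem_filter.2 ⟨Finset.mem_powerset.2 Finset.subset_union_left, hInd⟩
  · apply Finset.sup_le
    intro B hB
    obtain ⟨hBsub, hBind⟩ := Finset.mem_filter.1 hB
    exact key B (Finset.mem_powerset.1 hBsub) hBind
end
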